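/- arXiv:2103.04654 — 2 statements merged into one kernel-verified Lean document; each statement's English description precedes it below -/
import Mathlib

section
/- Let G be a group with involutive automorphism σ. Let Q ≤ G be σ-stable and let T₀ ≤ Q be a subgroup centralized by Q (in particular by elements of Q). Suppose c, c′ ∈ Q are cocycles with c = x⁻¹ · c′ · σ(x) for some x ∈ G, and suppose c′ centralizes T₀. Define ν(g) = c · σ(g) · c⁻¹. Then for every t ∈ T₀, ν(x⁻¹ t x) = x⁻¹ σ(t) x. -/
/-- The conjugation embedding `t ↦ x⁻¹ * t * x` of `T₀` is equivariant for the
twisted involution `ν g = c * σ g * c⁻¹` defined by the cocycle `c = x⁻¹ * c' * σ x`,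
provided `c'` centralizes `T₀`. -/
theorem stmt_6 {G : Type*} [Group G] (σ : G →* G) (hσ : ∀ g, σ (σ g) = g)
    (Q T₀ : Subgroup G) (hT₀Q : T₀ ≤ Q) (hQσ : ∀ q ∈ Q, σ q ∈ Q)
    (hT₀σ : ∀ t ∈ T₀, σ t ∈ T₀)
    (hQcent : ∀ q ∈ Q, ∀ t ∈ T₀, q * t = t * q)
    (c c' : G) (hcQ : c ∈ Q) (hc'Q : c' ∈ Q)
    (hc : c * σ c = 1) (hc' : c' * σ c' = 1)
    (x : G) (hx : c = x⁻¹ * c' * σ x)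
    (hc'cent : ∀ t ∈ T₀, c' * t = t * c') :
    ∀ t ∈ T₀, c * σ (x⁻¹ * t * x) * c⁻¹ = x⁻¹ * σ t * x := by
  intro t ht
  subst hx
  have h := hc'cent (σ t) (hT₀σ t ht)
  simp only [map_mul, map_inv, mul_inv_rev, inv_inv]
  calc x⁻¹ * c' * σ x * ((σ x)⁻¹ * σ t * σ x) * ((σ x)⁻¹ * (c'⁻¹ * x))
      = x⁻¹ * (c' * σ t) * c'⁻¹ * x := by group
    _ = x⁻¹ * (σ t * c') * c'⁻¹ * x := by rw [h]
    _ = x⁻¹ * σ t * x := by group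
end

section
/- Let G be a group, σ an involutive automorphism of G, Q a σ-stable subgroup, N₀ a σ-stable subgroup normalizing Q with Q ⊴ N₀, and suppose σ induces the trivial action on W₀ = N₀/Q. Then the rule ξ * w = class of (n⁻¹ c σ(n)), for ξ the Q-cohomology class of a cocycle c ∈ Q and n ∈ N₀ any representative of w ∈ W₀, defines a right action of the group W₀ on the set H¹(Q) = Z¹(Q)/∼, where Z¹(Q) = {c ∈ Q : c σ(c) = 1} and c ∼ c′ iff c′ = q⁻¹ c σ(q) for some q ∈ Q. -/
/-- The rule `ξ * w = [n⁻¹ c σ(n)]` defines a right action of `W₀ = N₀/Q` on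
`H¹(Q) = Z¹(Q)/∼`: the twist of a `Q`-valued cocycle is again a `Q`-valued
cocycle; the class of the result is independent of the choice of the cocycle `c`
in its class and of the representative `n` of `w`; representatives in `Q` act
trivially; and the action is compatible with multiplication in `W₀`.
Here `c ∼ c′` iff `c′ = q⁻¹ c σ(q)` for some `q ∈ Q`. -/
theorem stmt_18 {G : Type*} [Group G] (σ : G →* G) (hσ : ∀ g, σ (σ g) = g)
    (Q N₀ : Subgroup G) (hQN : Q ≤ N₀)
    (hQσ : ∀ q ∈ Q, σ q ∈ Q) (hNσ : ∀ n ∈ N₀, σ n ∈ N₀)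
    (hnormal : ∀ n ∈ N₀, ∀ q ∈ Q, n⁻¹ * q * n ∈ Q)
    (htriv : ∀ n ∈ N₀, n⁻¹ * σ n ∈ Q) :
    -- the twist of a `Q`-valued cocycle is a `Q`-valued cocycle
    (∀ c ∈ Q, c * σ c = 1 → ∀ n ∈ N₀,
        n⁻¹ * c * σ n ∈ Q ∧ (n⁻¹ * c * σ n) * σ (n⁻¹ * c * σ n) = 1) ∧
    -- independence of the representative cocycle `c`
    (∀ c ∈ Q, ∀ c' ∈ Q, c * σ c = 1 → c' * σ c' = 1 →
      (∃ q ∈ Q, c' = q⁻¹ * c * σ q) → ∀ n ∈ N₀,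
        ∃ q' ∈ Q, n⁻¹ * c' * σ n = q'⁻¹ * (n⁻¹ * c * σ n) * σ q') ∧
    -- independence of the representative `n` of `w`
    (∀ c ∈ Q, c * σ c = 1 → ∀ n ∈ N₀, ∀ q ∈ Q,
        ∃ q' ∈ Q, (n * q)⁻¹ * c * σ (n * q) = q'⁻¹ * (n⁻¹ * c * σ n) * σ q') ∧
    -- the identity of `W₀` acts trivially
    (∀ c ∈ Q, c * σ c = 1 → ∀ n ∈ Q,
        ∃ q' ∈ Q, n⁻¹ * c * σ n = q'⁻¹ * c * σ q') ∧
    -- compatibility with multiplication: `(ξ * w) * w' = ξ * (w w')`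
    (∀ c ∈ Q, c * σ c = 1 → ∀ n ∈ N₀, ∀ m ∈ N₀,
        m⁻¹ * (n⁻¹ * c * σ n) * σ m = (n * m)⁻¹ * c * σ (n * m)) := by
  refine ⟨?_, ?_, ?_, ?_, ?_⟩
  · intro c hc hcoc n hn
    constructor
    · have h1 : n⁻¹ * c * n ∈ Q := hnormal n hn c hc
      have h2 : n⁻¹ * σ n ∈ Q := htriv n hn
      have : (n⁻¹ * c * n) * (n⁻¹ * σ n) ∈ Q := Q.mul_mem h1 h2
      simpa [mul_assoc] using this
    · have : n⁻¹ * c * σ n * σ (n⁻¹ * c * σ n)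
          = n⁻¹ * (c * σ c) * n := by
        simp only [map_mul, map_inv, hσ]
        group
      rw [this, hcoc, mul_one, inv_mul_cancel]
  · intro c hc c' hc' hcoc hcoc' ⟨q, hq, hq'⟩ n hn
    refine ⟨n⁻¹ * q * n, hnormal n hn q hq, ?_⟩
    subst hq'
    simp only [map_mul, map_inv, hσ]
    group
  · intro c hc hcoc n hn q hq
    exact ⟨q, hq, by simp only [map_mul, mul_inv_rev]; group⟩
  · intro c hc hcoc n hn
    exact ⟨n, hn, rfl⟩
  · intro c hc hcoc n hn m hm
    simp only [map_mul, mul_inv_rev]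
    group
end
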